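/- Let r = (1363 − √1387369)/120 and w = (√1387369 − 1075)/96. Then w = 3 − 1.25·r, 1 ≤ w ≤ 1.5, and for every real n' with 0 ≤ n' ≤ 1, the denominator 8533/2352 − 1.25·n' + w/7 is positive and (w·n' − 3·n' + 35/6)/(8533/2352 − 1.25·n' + w/7) = r. -/

import Mathlib

/-!
Substituting `w = 3 - 5r/4` into the ratio, the coefficient of `n'` in the numerator is exactly
`r` times its coefficient in the denominator, so the ratio equals `r` for every `n'` as soon as
the constant terms also match, i.e. `r (8533/2352 + w/7) = 35/6`. After the substitution this is
the quadratic `420 r² - 9541 r + 13720 = 0`, whose discriminant is `49 · 1387369`; the given `r` is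
its smaller root.
-/

open Real

theorem sqrt_1387369_mem_Ioo : √1387369 ∈ Set.Ioo (1177 : ℝ) 1178 :=
  ⟨(lt_sqrt (by norm_num)).2 (by norm_num), (sqrt_lt' (by norm_num)).2 (by norm_num)⟩

theorem quadratic_eq_zero_of_eq_sqrt {r : ℝ} (hr : r = (1363 - √1387369) / 120) :
    420 * r ^ 2 - 9541 * r + 13720 = 0 := by
  have hsq : √1387369 ^ 2 = (1387369 : ℝ) := sq_sqrt (by norm_num)
  subst hr
  linear_combination (7 / 240) * hsq

theorem ratio_eq_of_quadratic {r w : ℝ} (hw : w = 3 - 1.25 * r)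
    (hr : 420 * r ^ 2 - 9541 * r + 13720 = 0) (n' : ℝ)
    (hden : 8533 / 2352 - 1.25 * n' + w / 7 ≠ 0) :
    (w * n' - 3 * n' + 35 / 6) / (8533 / 2352 - 1.25 * n' + w / 7) = r := by
  refine div_eq_of_eq_mul hden ?_
  subst hw
  linear_combination (1 / 2352) * hr

theorem stmt_18 :
    let r : ℝ := (1363 - Real.sqrt 1387369) / 120
    let w : ℝ := (Real.sqrt 1387369 - 1075) / 96
    w = 3 - 1.25 * r ∧ 1 ≤ w ∧ w ≤ 1.5 ∧
    ∀ n' : ℝ, 0 ≤ n' → n' ≤ 1 →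
      0 < 8533 / 2352 - 1.25 * n' + w / 7 ∧
      (w * n' - 3 * n' + 35 / 6) / (8533 / 2352 - 1.25 * n' + w / 7) = r := by
  intro r w
  obtain ⟨hlo, hhi⟩ := sqrt_1387369_mem_Ioo
  have hw : w = 3 - 1.25 * r := by simp only [r, w]; ring
  have hw_ge : 1 ≤ w := by simp only [w]; linarith
  have hw_le : w ≤ 1.5 := by simp only [w]; norm_num; linarith
  have hr := quadratic_eq_zero_of_eq_sqrt (r := r) rfl
  refine ⟨hw, hw_ge, hw_le, fun n' _ hn'1 => ?_⟩
  have hden : 0 < 8533 / 2352 - 1.25 * n' + w / 7 := by linarith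
  exact ⟨hden, ratio_eq_of_quadratic hw hr n' hden.ne'⟩
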